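/- arXiv:math/0602489 — 2 statements merged into one kernel-verified Lean document; each statement's English description precedes it below -/
import Mathlib

section
/- Let (A^•, d) be a cochain complex of real vector spaces with a right action of a group G by degree-preserving linear maps commuting with d, let ω ∈ A^m be G-invariant and exact, let 1 ≤ p ≤ m−1, and assume every closed element of A^q is exact for q = m−p, …, m−1. Suppose φ_0,…,φ_p and φ̄_0,…,φ̄_p are two sequences with φ_i, φ̄_i ∈ C^i(G, A^{m−i−1}), ω = −dφ_0 = −dφ̄_0, and δ'φ_{i−1} + δ''φ_i = 0, δ'φ̄_{i−1} + δ''φ̄_i = 0 for i = 1,…,p. Then there exists a cochain χ ∈ C^p(G, A^{m−p−1}) all of whose values are closed (d(χ(g_1,…,g_p)) = 0) such that δ'φ̄_p = δ'φ_p + δ'χ. Consequently, writing π : ker(d : A^{m−p−1} → A^{m−p}) → H^{m−p−1}(A) = ker d / im d for the projection onto cohomology (a map of right G-modules), both π∘δ'φ_p and π∘δ'φ̄_p are (p+1)-cocycles on G with values in the G-module H^{m−p−1}(A), and they are cohomologous: π∘δ'φ̄_p − π∘δ'φ_p = D(π∘χ). -/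
open scoped BigOperators

/-- Merge the `i`-th and `(i+1)`-st entries of a tuple of group elements by multiplication:
this produces the argument tuple `(g₁, …, g_i g_{i+1}, …, g_{p+1})` (0-indexed). -/
def mulIns {G : Type*} [Mul G] {p : ℕ} (g : Fin (p + 1) → G) (i : Fin p) : Fin p → G :=
  fun j =>
    if (j : ℕ) < (i : ℕ) then g j.castSucc
    else if (j : ℕ) = (i : ℕ) then g j.castSucc * g j.succ
    else g j.succ

/-- `δ'` : the differential of the standard complex of nonhomogeneous cochains of a group
`G` with values in a right `G`-module `A` (the right action being `act`):
`(Df)(g₁,…,g_{p+1}) = f(g₂,…,g_{p+1}) + ∑ (-1)^i f(g₁,…,g_i g_{i+1},…,g_{p+1})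
  + (-1)^{p+1} f(g₁,…,g_p)·g_{p+1}`. -/
def gd {G : Type*} [Mul G] {A : Type*} [AddCommGroup A] [Module ℝ A]
    (act : G → A →ₗ[ℝ] A) {p : ℕ} (f : (Fin p → G) → A) :
    (Fin (p + 1) → G) → A :=
  fun g =>
    f (Fin.tail g)
      + ∑ i : Fin p, ((-1 : ℝ) ^ ((i : ℕ) + 1)) • f (mulIns g i)
      + ((-1 : ℝ) ^ (p + 1)) • act (g (Fin.last p)) (f (Fin.init g))

/-- `δ''` : the second differential on `C^p(G, A^q)`,
`(δ''c)(g₁,…,g_p) = (−1)^p d (c (g₁,…,g_p))`. -/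
def gdd {G : Type*} {A : ℤ → Type*} [∀ q, AddCommGroup (A q)] [∀ q, Module ℝ (A q)]
    (d : ∀ q, A q →ₗ[ℝ] A (q + 1)) {p : ℕ} {q : ℤ} (c : (Fin p → G) → A q) :
    (Fin p → G) → A (q + 1) :=
  fun g => ((-1 : ℝ) ^ p) • d q (c g)

/-- Transport an element of a graded family along an equality of degrees. -/
def tr {A : ℤ → Type*} {q q' : ℤ} (h : q = q') (a : A q) : A q' := h ▸ a

/-!
The differences `ψᵢ = φ̄ᵢ - φᵢ` satisfy the same equations `δ'ψᵢ + δ''ψᵢ₊₁ = 0`, and `ψ₀` is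
closed. By induction one finds closed cochains `χᵢ` with `δ'ψᵢ = δ'χᵢ`: writing `χᵢ = dτ`
pointwise (exactness in degree `m - i - 1`), the cochain `ψᵢ₊₁ - (-1)ⁱ δ'τ` is closed because
`δ'` and `δ''` anticommute, and has the same coboundary as `ψᵢ₊₁` because `δ'δ' = 0`.
The same anticommutation shows that `δ'φ_p` has closed values; on closed-valued cochains `π`
intertwines `δ'` with the differential of `H`, which turns `δ'φ̄_p = δ'φ_p + δ'χ_p` into the
cocycle and coboundary statements.
-/

theorem neg_one_pow_mul_self (n : ℕ) : (-1 : ℝ) ^ n * (-1) ^ n = 1 := by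
  rw [← mul_pow]; norm_num

section Cochains

variable {G : Type*} [Mul G] {A : Type*} [AddCommGroup A] [Module ℝ A]
  {H : Type*} [AddCommGroup H] [Module ℝ H]

theorem gd_sub (act : G → A →ₗ[ℝ] A) {p : ℕ} (f f' : (Fin p → G) → A) :
    gd act (f - f') = gd act f - gd act f' := by
  funext gs
  simp only [gd, Pi.sub_apply, map_sub, smul_sub, Finset.sum_sub_distrib]
  abel

theorem gd_smul (act : G → A →ₗ[ℝ] A) (r : ℝ) {p : ℕ} (f : (Fin p → G) → A) :
    gd act (r • f) = r • gd act f := by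
  funext gs
  simp only [gd, Pi.smul_apply, map_smul, smul_add, Finset.smul_sum, smul_comm r]

theorem gd_comp_linearMap (act : G → A →ₗ[ℝ] A) (ρ : G → H →ₗ[ℝ] H) (T : A →ₗ[ℝ] H)
    (hT : ∀ g a, T (act g a) = ρ g (T a)) {p : ℕ} (f : (Fin p → G) → A) :
    gd ρ (fun gs => T (f gs)) = fun gs => T (gd act f gs) := by
  funext gs
  simp only [gd, map_add, map_smul, map_sum, hT]

theorem gd_apply_mem (act : G → A →ₗ[ℝ] A) {K : Submodule ℝ A} (hK : ∀ g, ∀ a ∈ K, act g a ∈ K)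
    {p : ℕ} {c : (Fin p → G) → A} (hc : ∀ gs, c gs ∈ K) (gs : Fin (p + 1) → G) :
    gd act c gs ∈ K :=
  K.add_mem (K.add_mem (hc _) (K.sum_mem fun _ _ => K.smul_mem _ (hc _)))
    (K.smul_mem _ (hK _ _ (hc _)))

theorem gd_comp_of_forall_mem (act : G → A →ₗ[ℝ] A) (ρ : G → H →ₗ[ℝ] H)
    {K : Submodule ℝ A} (hK : ∀ g, ∀ a ∈ K, act g a ∈ K) (π : A → H)
    (hπ_add : ∀ a b, a ∈ K → b ∈ K → π (a + b) = π a + π b)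
    (hπ_smul : ∀ (r : ℝ) a, a ∈ K → π (r • a) = r • π a)
    (hπ_equiv : ∀ g a, a ∈ K → π (act g a) = ρ g (π a))
    {p : ℕ} {c : (Fin p → G) → A} (hc : ∀ gs, c gs ∈ K) :
    gd ρ (fun gs => π (c gs)) = fun gs => π (gd act c gs) := by
  let πK : K →ₗ[ℝ] H :=
    { toFun := fun a => π a
      map_add' := fun a b => hπ_add a b a.2 b.2
      map_smul' := fun r a => hπ_smul r a a.2 }
  let actK : G → K →ₗ[ℝ] K := fun g => (act g).restrict (hK g)
  let cK : (Fin p → G) → K := fun gs => ⟨c gs, hc gs⟩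
  have hsub := gd_comp_linearMap actK act K.subtype (fun _ _ => rfl) cK
  have hπK := gd_comp_linearMap actK ρ πK (fun g a => hπ_equiv g a a.2) cK
  exact hπK.trans (congrArg (fun f gs => π (f gs)) hsub).symm

end Cochains

section Faces

variable {G : Type*} [Semigroup G] {p : ℕ}

theorem mulIns_mulIns_of_lt (g : Fin (p + 2) → G) {i : Fin (p + 1)} {j : Fin p}
    (hji : (j : ℕ) < i) :
    mulIns (mulIns g i) j = mulIns (mulIns g ⟨j, by omega⟩) ⟨i - 1, by omega⟩ := by
  funext k
  simp only [mulIns, Fin.val_castSucc, Fin.val_succ]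
  split_ifs <;> first | omega | simp only [Fin.succ_castSucc, mul_assoc]

theorem tail_mulIns_zero (g : Fin (p + 2) → G) :
    Fin.tail (mulIns g 0) = Fin.tail (Fin.tail g) := by
  funext k
  simp [Fin.tail, mulIns]

theorem tail_mulIns_succ (g : Fin (p + 2) → G) (i : Fin p) :
    Fin.tail (mulIns g i.succ) = mulIns (Fin.tail g) i := by
  funext k
  simp only [Fin.tail, mulIns, Fin.val_succ, Fin.succ_castSucc]
  split_ifs <;> first | omega | rfl

theorem init_mulIns_castSucc (g : Fin (p + 2) → G) (i : Fin p) :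
    Fin.init (mulIns g i.castSucc) = mulIns (Fin.init g) i := by
  funext k
  simp only [Fin.init, mulIns, Fin.val_castSucc, Fin.succ_castSucc]

theorem init_mulIns_last (g : Fin (p + 2) → G) :
    Fin.init (mulIns g (Fin.last p)) = Fin.init (Fin.init g) := by
  funext k
  simp [Fin.init, mulIns]

theorem mulIns_castSucc_last (g : Fin (p + 2) → G) (i : Fin p) :
    mulIns g i.castSucc (Fin.last p) = g (Fin.last (p + 1)) := by
  simp [mulIns, Fin.succ_last, i.isLt.not_gt, i.isLt.ne']

theorem mulIns_last_last (g : Fin (p + 2) → G) :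
    mulIns g (Fin.last p) (Fin.last p) = g (Fin.last p).castSucc * g (Fin.last (p + 1)) := by
  simp [mulIns]

variable {A : Type*} [AddCommGroup A] [Module ℝ A]

theorem mulIns_mulIns_terms_cancel_of_lt (f : (Fin p → G) → A) (g : Fin (p + 2) → G)
    {i : Fin (p + 1)} {j : Fin p} (hji : (j : ℕ) < i) :
    ((-1 : ℝ) ^ ((i : ℕ) + 1) * (-1) ^ ((j : ℕ) + 1)) • f (mulIns (mulIns g i) j)
      + ((-1 : ℝ) ^ ((j : ℕ) + 1) * (-1) ^ ((i : ℕ) - 1 + 1)) •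
        f (mulIns (mulIns g ⟨j, by omega⟩) ⟨i - 1, by omega⟩) = 0 := by
  have hsign : (-1 : ℝ) ^ ((i : ℕ) + 1) = -(-1) ^ ((i : ℕ) - 1 + 1) := by
    rw [Nat.sub_add_cancel (by omega), pow_succ, mul_neg_one]
  rw [mulIns_mulIns_of_lt g hji, ← add_smul, hsign, neg_mul, mul_comm, neg_add_cancel, zero_smul]

theorem sum_sum_mulIns_mulIns (f : (Fin p → G) → A) (g : Fin (p + 2) → G) :
    ∑ i : Fin (p + 1), ∑ j : Fin p,
      ((-1 : ℝ) ^ ((i : ℕ) + 1) * (-1) ^ ((j : ℕ) + 1)) • f (mulIns (mulIns g i) j) = 0 := by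
  rw [← Fintype.sum_prod_type']
  -- the simplicial identity pairs the faces `(i, j)` with `j < i` and `(j, i - 1)`
  let σ : Fin (p + 1) × Fin p → Fin (p + 1) × Fin p := fun a =>
    if h : (a.2 : ℕ) < a.1 then (⟨a.2, by omega⟩, ⟨a.1 - 1, by omega⟩)
    else (a.2.succ, ⟨a.1, by omega⟩)
  refine Finset.sum_ninvolution σ (fun ⟨i, j⟩ => ?_) (fun ⟨i, j⟩ _ => ?_)
    (fun _ => Finset.mem_univ _) (fun ⟨i, j⟩ => ?_)
  · by_cases hji : (j : ℕ) < i
    · simpa only [σ, dif_pos hji] using mulIns_mulIns_terms_cancel_of_lt f g hji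
    · have hlt : ((⟨i, by omega⟩ : Fin p) : ℕ) < j.succ := by simp; omega
      simp only [σ, dif_neg hji]
      rw [add_comm]
      simpa using mulIns_mulIns_terms_cancel_of_lt f g hlt
  · by_cases hji : (j : ℕ) < i <;> simp [σ, hji, Prod.ext_iff, Fin.ext_iff] <;> omega
  · by_cases hji : (j : ℕ) < i
    · have : ¬ (i : ℕ) - 1 < j := by omega
      simp [σ, hji, this, Prod.ext_iff, Fin.ext_iff]
      omega
    · have : (i : ℕ) < j + 1 := by omega
      simp [σ, hji, this]

theorem sum_smul_tail_mulIns (f : (Fin p → G) → A) (g : Fin (p + 2) → G) :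
    ∑ i : Fin (p + 1), (-1 : ℝ) ^ ((i : ℕ) + 1) • f (Fin.tail (mulIns g i))
      = -f (Fin.tail (Fin.tail g))
        - ∑ j : Fin p, (-1 : ℝ) ^ ((j : ℕ) + 1) • f (mulIns (Fin.tail g) j) := by
  simp only [Fin.sum_univ_succ, tail_mulIns_zero, tail_mulIns_succ, Fin.val_zero, Fin.val_succ,
    pow_succ _ ((_ : ℕ) + 1), mul_neg_one, neg_smul, Finset.sum_neg_distrib, zero_add, pow_one,
    one_smul]
  abel

theorem sum_smul_act_init_mulIns (act : G → A →ₗ[ℝ] A) (f : (Fin p → G) → A)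
    (g : Fin (p + 2) → G) :
    ∑ i : Fin (p + 1), ((-1 : ℝ) ^ ((i : ℕ) + 1) * (-1) ^ (p + 1)) •
        act (mulIns g i (Fin.last p)) (f (Fin.init (mulIns g i)))
      = act (g (Fin.last p).castSucc * g (Fin.last (p + 1))) (f (Fin.init (Fin.init g)))
        - ∑ j : Fin p, ((-1 : ℝ) ^ (p + 1 + 1) * (-1) ^ ((j : ℕ) + 1)) •
            act (g (Fin.last (p + 1))) (f (mulIns (Fin.init g) j)) := by
  have hsign (k : ℕ) :
      (-1 : ℝ) ^ (k + 1) * (-1) ^ (p + 1) = -((-1) ^ (p + 1 + 1) * (-1) ^ (k + 1)) := by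
    ring
  simp only [Fin.sum_univ_castSucc, mulIns_castSucc_last, init_mulIns_castSucc, mulIns_last_last,
    init_mulIns_last, Fin.val_castSucc, Fin.val_last, neg_one_pow_mul_self, one_smul]
  simp only [hsign, neg_smul, Finset.sum_neg_distrib]
  abel

theorem gd_gd (act : G → A →ₗ[ℝ] A) (hact : ∀ g h a, act (g * h) a = act h (act g a))
    (f : (Fin p → G) → A) : gd act (gd act f) = 0 := by
  funext g
  have htail : Fin.tail g (Fin.last p) = g (Fin.last (p + 1)) := by
    simp [Fin.tail, Fin.succ_last]
  have hinit : Fin.init (Fin.tail g) = Fin.tail (Fin.init g) := rfl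
  have hinit_last : Fin.init g (Fin.last p) = g (Fin.last p).castSucc := rfl
  simp only [gd, map_add, map_smul, map_sum, smul_add, Finset.smul_sum, smul_smul,
    Finset.sum_add_distrib, htail, hinit, sum_smul_tail_mulIns, sum_smul_act_init_mulIns,
    sum_sum_mulIns_mulIns, hinit_last, ← hact]
  rw [pow_succ _ (p + 1), mul_neg_one, neg_mul, neg_one_pow_mul_self]
  simp only [neg_mul, neg_smul, one_smul, Pi.zero_apply]
  abel

end Faces

section Graded

theorem tr_rfl {A : ℤ → Type*} {q : ℤ} (a : A q) : tr rfl a = a := rfl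

theorem tr_injective {A : ℤ → Type*} {q q' : ℤ} (h : q = q') :
    Function.Injective (tr (A := A) h) := by
  subst h
  exact fun _ _ => id

theorem tr_sub {A : ℤ → Type*} [∀ q, AddCommGroup (A q)] {q q' : ℤ} (h : q = q') (a b : A q) :
    tr (A := A) h (a - b) = tr h a - tr h b := by
  subst h
  rfl

variable {A : ℤ → Type*} [∀ q, AddCommGroup (A q)] [∀ q, Module ℝ (A q)]
  (d : ∀ q, A q →ₗ[ℝ] A (q + 1))

theorem exists_tr_d_eq_tr_d {q₁ q₂ q : ℤ} (h₁ : q₁ + 1 = q) (h₂ : q₂ + 1 = q) (b : A q₁) :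
    ∃ b' : A q₂, tr h₂ (d q₂ b') = tr h₁ (d q₁ b) := by
  obtain rfl : q₁ = q₂ := by omega
  exact ⟨b, rfl⟩

theorem gdd_sub {G : Type*} {p : ℕ} {q : ℤ} (c c' : (Fin p → G) → A q) :
    gdd d (c - c') = gdd d c - gdd d c' := by
  funext gs
  simp only [gdd, Pi.sub_apply, map_sub, smul_sub]

variable {G : Type*} (act : ∀ q, G → A q →ₗ[ℝ] A q)

theorem gd_gdd [Mul G] (hcomm : ∀ q (g : G) (a : A q), d q (act q g a) = act (q + 1) g (d q a))
    {p : ℕ} {q : ℤ} (c : (Fin p → G) → A q) :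
    gd (act (q + 1)) (gdd d c) = -gdd d (gd (act q) c) := by
  have hc : gdd d c = (-1 : ℝ) ^ p • fun gs => d q (c gs) := rfl
  rw [hc, gd_smul, gd_comp_linearMap (act q) (act (q + 1)) (d q) (hcomm q)]
  funext gs
  simp only [gdd, Pi.smul_apply, Pi.neg_apply, pow_succ, mul_neg_one, neg_smul, neg_neg]

theorem gd_add_tr_gdd_sub [Mul G] {q q₁ : ℤ} (h : q + 1 = q₁) {i : ℕ}
    {u u' : (Fin i → G) → A q₁} {v v' : (Fin (i + 1) → G) → A q}
    (huv : gd (act q₁) u + (fun gs => tr h (gdd d v gs)) = 0)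
    (huv' : gd (act q₁) u' + (fun gs => tr h (gdd d v' gs)) = 0) :
    gd (act q₁) (u' - u) + (fun gs => tr h (gdd d (v' - v) gs)) = 0 := by
  funext gs
  have h₁ := congrFun huv gs
  have h₂ := congrFun huv' gs
  simp only [Pi.add_apply, Pi.zero_apply] at h₁ h₂ ⊢
  rw [gd_sub, gdd_sub, Pi.sub_apply, Pi.sub_apply, tr_sub, sub_add_sub_comm, h₁, h₂, sub_zero]

theorem d_gd_eq_zero_of_gd_add_tr_gdd [Semigroup G]
    (hact_mul : ∀ q (g h : G) (a : A q), act q (g * h) a = act q h (act q g a))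
    (hcomm : ∀ q (g : G) (a : A q), d q (act q g a) = act (q + 1) g (d q a))
    {q q₁ : ℤ} (h : q + 1 = q₁) {i : ℕ} {u : (Fin i → G) → A q₁} {v : (Fin (i + 1) → G) → A q}
    (hrel : gd (act q₁) u + (fun gs => tr h (gdd d v gs)) = 0) (gs : Fin (i + 2) → G) :
    d q (gd (act q) v gs) = 0 := by
  subst h
  have hv : gdd d v = (-1 : ℝ) • gd (act (q + 1)) u := by
    rw [neg_one_smul]
    exact eq_neg_of_add_eq_zero_right hrel
  have hgdd : gdd d (gd (act q) v) = 0 := by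
    rw [← neg_neg (gdd d _), ← gd_gdd d act hcomm, hv, gd_smul, gd_gd _ (hact_mul _), smul_zero,
      neg_zero]
  simpa [gdd] using congrFun hgdd gs

theorem exists_closed_gd_eq_of_gd_eq_gd_d [Semigroup G]
    (hact_mul : ∀ q (g h : G) (a : A q), act q (g * h) a = act q h (act q g a))
    (hcomm : ∀ q (g : G) (a : A q), d q (act q g a) = act (q + 1) g (d q a))
    {q q₁ : ℤ} (h : q + 1 = q₁) {i : ℕ} {ψ : (Fin i → G) → A q₁} {ψ' : (Fin (i + 1) → G) → A q}
    (hrel : gd (act q₁) ψ + (fun gs => tr h (gdd d ψ' gs)) = 0) (τ : (Fin i → G) → A q)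
    (hτ : gd (act q₁) ψ = gd (act q₁) (fun gs => tr h (d q (τ gs)))) :
    ∃ θ : (Fin (i + 1) → G) → A q, (∀ gs, d q (θ gs) = 0) ∧ gd (act q) ψ' = gd (act q) θ := by
  subst h
  simp only [tr_rfl] at hrel hτ
  refine ⟨ψ' - (-1 : ℝ) ^ i • gd (act q) τ, fun gs => ?_, ?_⟩
  · have hrel_gs : d q (gd (act q) τ gs) + (-1 : ℝ) ^ (i + 1) • d q (ψ' gs) = 0 := by
      have := congrFun hrel gs
      rwa [hτ, gd_comp_linearMap (act q) (act (q + 1)) (d q) (hcomm q)] at this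
    calc d q ((ψ' - (-1 : ℝ) ^ i • gd (act q) τ) gs)
        = (-1 : ℝ) ^ (i + 1) • (d q (gd (act q) τ gs) + (-1 : ℝ) ^ (i + 1) • d q (ψ' gs)) := by
          rw [smul_add, smul_smul, neg_one_pow_mul_self, one_smul, pow_succ, mul_neg_one,
            neg_smul, Pi.sub_apply, Pi.smul_apply, map_sub, map_smul]
          abel
      _ = 0 := by rw [hrel_gs, smul_zero]
  · rw [gd_sub, gd_smul, gd_gd _ (hact_mul q), smul_zero, sub_zero]

theorem exists_closed_gd_eq_gd [Semigroup G]
    (hact_mul : ∀ q (g h : G) (a : A q), act q (g * h) a = act q h (act q g a))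
    (hcomm : ∀ q (g : G) (a : A q), d q (act q g a) = act (q + 1) g (d q a))
    (e : ℕ → ℤ) (he : ∀ i, e (i + 1) + 1 = e i) (p : ℕ) (ψ : ∀ i, (Fin i → G) → A (e i))
    (hψ₀ : ∀ gs, d (e 0) (ψ 0 gs) = 0)
    (hrel : ∀ i, i + 1 ≤ p →
      gd (act (e i)) (ψ i) + (fun gs => tr (he i) (gdd d (ψ (i + 1)) gs)) = 0)
    (hexact : ∀ i, i + 1 ≤ p → ∀ a : A (e i), d (e i) a = 0 →
      ∃ b : A (e (i + 1)), tr (he i) (d (e (i + 1)) b) = a) :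
    ∀ i ≤ p, ∃ χ : (Fin i → G) → A (e i),
      (∀ gs, d (e i) (χ gs) = 0) ∧ gd (act (e i)) (ψ i) = gd (act (e i)) χ := by
  intro i hi
  induction i with
  | zero => exact ⟨ψ 0, hψ₀, rfl⟩
  | succ i ih =>
    obtain ⟨χ, hχ_closed, hχ⟩ := ih (by omega)
    choose τ hτ using fun gs => hexact i hi (χ gs) (hχ_closed gs)
    exact exists_closed_gd_eq_of_gd_eq_gd_d d act hact_mul hcomm (he i) (hrel i hi) τ
      (hχ.trans (congrArg _ (funext hτ).symm))

end Graded

/-- Two sequences `φ`, `φ̄` as in the construction give cochains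
`δ'φ_p`, `δ'φ̄_p` differing by `δ'χ` for some cochain `χ` with closed values; hence the
induced `(p+1)`-cocycles on `G` with values in the `G`-module
`H^{m−p−1}(A) = ker d / im d` (obtained by composing with the projection `π` onto
cohomology) are cocycles and are cohomologous: `π∘δ'φ̄_p − π∘δ'φ_p = D(π∘χ)`. -/
theorem statement2 {G : Type*} [Group G] {A : ℤ → Type*}
    [∀ q, AddCommGroup (A q)] [∀ q, Module ℝ (A q)]
    (d : ∀ q, A q →ₗ[ℝ] A (q + 1))
    (act : ∀ q, G → A q →ₗ[ℝ] A q)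
    (hact_mul : ∀ (q : ℤ) (g h : G) (a : A q), act q (g * h) a = act q h (act q g a))
    (hcomm : ∀ (q : ℤ) (g : G) (a : A q), d q (act q g a) = act (q + 1) g (d q a))
    (m : ℤ) (p : ℕ) (hp : 1 ≤ p)
    (ω : A m)
    (hexact : ∀ q : ℤ, m - p ≤ q → q ≤ m - 1 → ∀ a : A q, d q a = 0 →
        ∃ b : A (q - 1), tr (by omega) (d (q - 1) b) = a)
    -- the two sequences of cochains
    (φ φ' : ∀ i : ℕ, (Fin i → G) → A (m - i - 1))
    (hφ0 : ω = - tr (by omega) (d (m - (0 : ℕ) - 1) (φ 0 ![])))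
    (hφ0' : ω = - tr (by omega) (d (m - (0 : ℕ) - 1) (φ' 0 ![])))
    (hφ : ∀ i : ℕ, i + 1 ≤ p →
        gd (act (m - i - 1)) (φ i)
          + (fun gs => tr (by omega) (gdd d (φ (i + 1)) gs)) = 0)
    (hφ' : ∀ i : ℕ, i + 1 ≤ p →
        gd (act (m - i - 1)) (φ' i)
          + (fun gs => tr (by omega) (gdd d (φ' (i + 1)) gs)) = 0)
    -- `H` is the cohomology `H^{m-p-1}(A)` as a right `G`-module, and
    -- `π` is the projection of the closed elements of `A^{m-p-1}` onto it
    (H : Type*) [AddCommGroup H] [Module ℝ H]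
    (ρ : G → H →ₗ[ℝ] H)
    (π : A (m - p - 1) → H)
    (hπ_add : ∀ a b : A (m - p - 1), d (m - p - 1) a = 0 → d (m - p - 1) b = 0 →
        π (a + b) = π a + π b)
    (hπ_smul : ∀ (r : ℝ) (a : A (m - p - 1)), d (m - p - 1) a = 0 →
        π (r • a) = r • π a)
    (hπ_equiv : ∀ (g : G) (a : A (m - p - 1)), d (m - p - 1) a = 0 →
        π (act (m - p - 1) g a) = ρ g (π a)) :
    ∃ χ : (Fin p → G) → A (m - p - 1),
      -- all values of χ are closed
      (∀ gs : Fin p → G, d (m - p - 1) (χ gs) = 0)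
      -- δ'φ̄_p = δ'φ_p + δ'χ
      ∧ gd (act (m - p - 1)) (φ' p)
          = gd (act (m - p - 1)) (φ p) + gd (act (m - p - 1)) χ
      -- π∘δ'φ_p and π∘δ'φ̄_p are (p+1)-cocycles with values in H^{m-p-1}(A)
      ∧ gd ρ (fun gs => π (gd (act (m - p - 1)) (φ p) gs)) = 0
      ∧ gd ρ (fun gs => π (gd (act (m - p - 1)) (φ' p) gs)) = 0
      -- and they are cohomologous: π∘δ'φ̄_p − π∘δ'φ_p = D(π∘χ)
      ∧ (fun gs => π (gd (act (m - p - 1)) (φ' p) gs))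
          = (fun gs => π (gd (act (m - p - 1)) (φ p) gs)) + gd ρ (fun gs => π (χ gs)) := by
  obtain ⟨n, rfl⟩ : ∃ n, p = n + 1 := ⟨p - 1, by omega⟩
  have hψ₀ (gs : Fin 0 → G) : d _ ((φ' 0 - φ 0) gs) = 0 := by
    rw [Subsingleton.elim gs ![], Pi.sub_apply, map_sub, sub_eq_zero]
    exact tr_injective _ (neg_inj.mp (hφ0'.symm.trans hφ0))
  obtain ⟨χ, hχ_closed, hχ⟩ := exists_closed_gd_eq_gd d act hact_mul hcomm (fun i => m - i - 1)
    (fun i => by omega) (n + 1) (fun i => φ' i - φ i) hψ₀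
    (fun i hi => gd_add_tr_gdd_sub d act _ (hφ i hi) (hφ' i hi))
    (fun i hi a ha => by
      obtain ⟨b, rfl⟩ := hexact _ (by omega) (by omega) a ha
      exact exists_tr_d_eq_tr_d d _ _ b)
    (n + 1) le_rfl
  have hgd_eq : gd (act _) (φ' (n + 1)) = gd (act _) (φ (n + 1)) + gd (act _) χ := by
    rw [← hχ, gd_sub, add_sub_cancel]
  set K := LinearMap.ker (d (m - (n + 1 : ℕ) - 1))
  have hK (g : G) (a) (ha : a ∈ K) : act _ g a ∈ K := by
    simp only [K, LinearMap.mem_ker] at ha ⊢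
    rw [hcomm, ha, map_zero]
  have hgdφ := d_gd_eq_zero_of_gd_add_tr_gdd d act hact_mul hcomm _ (hφ n le_rfl)
  have hgdφ' := d_gd_eq_zero_of_gd_add_tr_gdd d act hact_mul hcomm _ (hφ' n le_rfl)
  have hπ_gd : ∀ {k : ℕ} {c : (Fin k → G) → A (m - (n + 1 : ℕ) - 1)}, (∀ gs, c gs ∈ K) →
      gd ρ (fun gs => π (c gs)) = fun gs => π (gd (act _) c gs) :=
    gd_comp_of_forall_mem (act _) ρ hK π hπ_add hπ_smul hπ_equiv
  have hπ₀ : π 0 = 0 := by simpa using hπ_smul 0 0 (map_zero _)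
  refine ⟨χ, hχ_closed, hgd_eq, ?_, ?_, ?_⟩
  · rw [hπ_gd hgdφ, gd_gd _ (hact_mul _)]
    exact funext fun _ => hπ₀
  · rw [hπ_gd hgdφ', gd_gd _ (hact_mul _)]
    exact funext fun _ => hπ₀
  · rw [hπ_gd hχ_closed, hgd_eq]
    exact funext fun gs => hπ_add _ _ (hgdφ gs) (gd_apply_mem _ hK hχ_closed gs)
end

section
/- Let w be an alternating m-form on ℝⁿ (1 ≤ m ≤ n), and let the group G = (ℝⁿ, +) act on forms on ℝⁿ by pullback along translations. Let φ_{m−1} ∈ C^{m−1}(G, Ω^0(ℝⁿ)) be given by φ_{m−1}(a_1,…,a_{m−1})(x) = [(−1)^{m−2}/m!] · w(a_1,…,a_{m−1}, x). Then for all a_1,…,a_m ∈ ℝⁿ, the function δ'φ_{m−1}(a_1,…,a_m) : ℝⁿ → ℝ is the constant function with value (1/m!) · w(a_1,…,a_m). -/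
open scoped BigOperators

noncomputable section

/-- A (raw) differential `q`-form on `ℝⁿ`: a map assigning to every point of `ℝⁿ` a
function of `q` vectors (alternating `q`-linear, in the case of an actual form). -/
abbrev Form (n q : ℕ) :=
  EuclideanSpace ℝ (Fin n) → (Fin q → EuclideanSpace ℝ (Fin n)) → ℝ

/-- The exterior derivative,
`(dη)(x)(v₀,…,v_q) = ∑ᵢ (−1)^i (Dη(x)vᵢ)(v₀,…,v̂ᵢ,…,v_q)`,
where `D` is the Fréchet derivative. -/
def extD {n q : ℕ} (η : Form n q) : Form n (q + 1) :=
  fun x v => ∑ i : Fin (q + 1),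
    (-1 : ℝ) ^ (i : ℕ) * fderiv ℝ (fun y => η y (v ∘ i.succAbove)) x (v i)

/-- Merge the `i`-th and `(i+1)`-st entries of a tuple of elements of an additive group:
the tuple `(g₁, …, g_i + g_{i+1}, …, g_{p+1})` (0-indexed). -/
def addIns {G : Type*} [Add G] {p : ℕ} (g : Fin (p + 1) → G) (i : Fin p) : Fin p → G :=
  fun j =>
    if (j : ℕ) < (i : ℕ) then g j.castSucc
    else if (j : ℕ) = (i : ℕ) then g j.castSucc + g j.succ
    else g j.succ

/-- `δ'` : the nonhomogeneous group-cochain differential, for a right action `act` of an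
additive group `G`:
`(Df)(g₁,…,g_{p+1}) = f(g₂,…,g_{p+1}) + ∑ (-1)^i f(g₁,…,g_i + g_{i+1},…,g_{p+1})
  + (-1)^{p+1} (f(g₁,…,g_p))·g_{p+1}`. -/
def gdA {G : Type*} [Add G] {A : Type*} [AddCommGroup A] [Module ℝ A]
    (act : G → A → A) {p : ℕ} (f : (Fin p → G) → A) : (Fin (p + 1) → G) → A :=
  fun g =>
    f (Fin.tail g)
      + ∑ i : Fin p, ((-1 : ℝ) ^ ((i : ℕ) + 1)) • f (addIns g i)
      + ((-1 : ℝ) ^ (p + 1)) • act (g (Fin.last p)) (f (Fin.init g))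

/-- Pullback of a `q`-form along the translation `x ↦ x + a`: `(η·a)(x) = η(x + a)`. -/
def pbT {n q : ℕ} (a : EuclideanSpace ℝ (Fin n)) (η : Form n q) : Form n q :=
  fun x v => η (x + a) v

/-- Pullback of a `0`-form (a function `ℝⁿ → ℝ`) along the translation `x ↦ x + a`:
`(f·a)(x) = f(x + a)`. -/
def pbT0 {n : ℕ} (a : EuclideanSpace ℝ (Fin n)) (f : EuclideanSpace ℝ (Fin n) → ℝ) :
    EuclideanSpace ℝ (Fin n) → ℝ :=
  fun x => f (x + a)

/-! Each merged term `w(…, aᵢ + aᵢ₊₁, …, x)` splits by additivity in slot `i` into the two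
terms in which `aᵢ₊₁`, resp. `aᵢ`, is deleted, and the translated last term
`w(a₁, …, a_m, x + a_{m+1})` splits off `w(a₁, …, a_{m+1})`. The alternating sum of the
terms `w(a with one entry deleted, x)` then telescopes to zero, so `δ'φ(a)(x) = (-1)^{m+1} c w(a)`
when `φ(b)(y) = c w(b, y)`, and for `c = (-1)^{m+1}/(m+1)!` the signs cancel. -/

lemma addIns_eq_contractNth {G : Type*} [Add G] {p : ℕ} (g : Fin (p + 1) → G) (i : Fin p) :
    addIns g i = Fin.contractNth i.castSucc (· + ·) g :=
  rfl

lemma Fin.succAbove_succ_eq_succAbove_castSucc {m : ℕ} {i k : Fin m} (h : k ≠ i) :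
    i.succ.succAbove k = i.castSucc.succAbove k := by
  rcases h.lt_or_gt with h | h
  · rw [succAbove_succ_of_le _ _ h.le, succAbove_castSucc_of_lt _ _ h]
  · rw [succAbove_succ_of_lt _ _ h, succAbove_castSucc_of_le _ _ h.le]

lemma addIns_eq_update {G : Type*} [Add G] {p : ℕ} (g : Fin (p + 1) → G) (i : Fin p) :
    addIns g i = Function.update (g ∘ i.castSucc.succAbove) i (g i.castSucc + g i.succ) := by
  ext k
  rcases eq_or_ne k i with rfl | h
  · simp [addIns]
  · rw [Function.update_of_ne h, addIns_eq_contractNth, Fin.contractNth_apply_of_ne _ _ _ _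
      (by simpa [Fin.val_eq_val] using h.symm)]
    rfl

lemma comp_succAbove_succ_eq_update {α : Type*} {p : ℕ} (g : Fin (p + 1) → α) (i : Fin p) :
    g ∘ i.succ.succAbove = Function.update (g ∘ i.castSucc.succAbove) i (g i.castSucc) := by
  ext k
  rcases eq_or_ne k i with rfl | h
  · simp
  · simp [Function.update_of_ne h, Fin.succAbove_succ_eq_succAbove_castSucc h]

theorem MultilinearMap.map_addIns {R M N : Type*} [CommSemiring R] [AddCommMonoid M]
    [AddCommMonoid N] [Module R M] [Module R N] {m : ℕ}
    (f : MultilinearMap R (fun _ : Fin m => M) N) (a : Fin (m + 1) → M) (i : Fin m) :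
    f (addIns a i) = f (a ∘ i.succ.succAbove) + f (a ∘ i.castSucc.succAbove) := by
  conv_rhs => rw [comp_succAbove_succ_eq_update, ← Function.update_eq_self i (a ∘ _)]
  rw [addIns_eq_update, f.map_update_add]
  simp

theorem Fin.sum_neg_one_pow_smul_castSucc_add_succ {R N : Type*} [CommRing R] [AddCommGroup N]
    [Module R N] {m : ℕ} (F : Fin (m + 1) → N) :
    ∑ i : Fin m, (-1 : R) ^ ((i : ℕ) + 1) • (F i.castSucc + F i.succ)
      = (-1 : R) ^ m • F (last m) - F 0 := by
  induction m with
  | zero => simp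
  | succ m ih =>
    rw [Fin.sum_univ_castSucc]
    simp only [val_castSucc, succ_castSucc, val_last, succ_last]
    rw [ih (fun k => F k.castSucc)]
    simp only [castSucc_zero, pow_succ]
    module

theorem gdA_translate_snoc {M N : Type*} [AddCommGroup M] [Module ℝ M] [AddCommGroup N]
    [Module ℝ N] {m : ℕ} (w : MultilinearMap ℝ (fun _ : Fin (m + 1) => M) N)
    (a : Fin (m + 1) → M) :
    gdA (fun (g : M) (φ : M → N) y => φ (y + g)) (fun b y => w (Fin.snoc b y)) a
      = fun _ => (-1 : ℝ) ^ (m + 1) • w a := by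
  ext x
  set F : Fin (m + 1) → N := fun k => w (Fin.snoc (a ∘ k.succAbove) x)
  have h_first : w (Fin.snoc (Fin.tail a) x) = F 0 := rfl
  have h_mid (i : Fin m) : w (Fin.snoc (addIns a i) x) = F i.castSucc + F i.succ := by
    simp only [← w.curryRight_apply, w.curryRight.map_addIns, LinearMap.add_apply, F]
    rw [add_comm]
  have h_last : w (Fin.snoc (Fin.init a) (x + a (Fin.last m))) = F (Fin.last m) + w a := by
    rw [← w.curryRight_apply, map_add, w.curryRight_apply, w.curryRight_apply,
      Fin.snoc_init_self]
    simp only [F, Fin.succAbove_last]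
    rfl
  simp only [gdA, Pi.add_apply, Finset.sum_apply, Pi.smul_apply, h_first, h_mid, h_last]
  rw [Fin.sum_neg_one_pow_smul_castSucc_add_succ]
  module

theorem statement9_general (n m : ℕ)
    (w : AlternatingMap ℝ (EuclideanSpace ℝ (Fin n)) ℝ (Fin (m + 1))) :
    ∀ (a : Fin (m + 1) → EuclideanSpace ℝ (Fin n)) (x : EuclideanSpace ℝ (Fin n)),
      gdA pbT0
          (fun (b : Fin m → EuclideanSpace ℝ (Fin n)) (y : EuclideanSpace ℝ (Fin n)) =>
            ((-1 : ℝ) ^ (m + 1) / (Nat.factorial (m + 1) : ℝ)) * w (Fin.snoc b y))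
          a x
        = (1 / (Nat.factorial (m + 1) : ℝ)) * w a := by
  intro a x
  have h := congrFun (gdA_translate_snoc
    (((-1 : ℝ) ^ (m + 1) / (Nat.factorial (m + 1) : ℝ)) • w.toMultilinearMap) a) x
  simp only [smul_apply, AlternatingMap.coe_multilinearMap, smul_eq_mul] at h
  rw [show pbT0 = fun (g : EuclideanSpace ℝ (Fin n)) (φ : EuclideanSpace ℝ (Fin n) → ℝ) y =>
    φ (y + g) from rfl, h]
  field_simp
  rw [← pow_mul, pow_mul', neg_one_sq, one_pow, one_mul]

/-- (Stated with the degree of the form written as `m + 1 ≥ 1`.)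
Let `w` be an alternating `(m+1)`-form on `ℝⁿ` and let the group `G = (ℝⁿ, +)` act on
forms by pullback along translations.  For the cochain
`φ_m ∈ C^m(G, Ω⁰(ℝⁿ))`, `φ_m(a₁,…,a_m)(x) = [(−1)^{m−1}/(m+1)!]·w(a₁,…,a_m,x)`,
the function `δ'φ_m(a₁,…,a_{m+1}) : ℝⁿ → ℝ` is the constant function with value
`(1/(m+1)!)·w(a₁,…,a_{m+1})`. -/
theorem statement9 (n m : ℕ) (hmn : m + 1 ≤ n)
    (w : AlternatingMap ℝ (EuclideanSpace ℝ (Fin n)) ℝ (Fin (m + 1))) :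
    ∀ (a : Fin (m + 1) → EuclideanSpace ℝ (Fin n)) (x : EuclideanSpace ℝ (Fin n)),
      gdA pbT0
          (fun (b : Fin m → EuclideanSpace ℝ (Fin n)) (y : EuclideanSpace ℝ (Fin n)) =>
            ((-1 : ℝ) ^ (m + 1) / (Nat.factorial (m + 1) : ℝ)) * w (Fin.snoc b y))
          a x
        = (1 / (Nat.factorial (m + 1) : ℝ)) * w a :=
  statement9_general n m w
end
end
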